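/- Let V be a real Hilbert space with a continuous coercive bilinear form a and let W ⊃ V be a second Hilbert space (e.g., L²) with ‖·‖_W ≤ ‖·‖_V. Suppose the adjoint problem is regular in the sense that for each g ∈ W there is z_g ∈ V with a(v, z_g) = ⟨g, v⟩_W for all v ∈ V and inf_{v_h ∈ V_h} ‖z_g − v_h‖_V ≤ C_* h ‖g‖_W. Then the Galerkin error satisfies ‖u − u_h‖_W ≤ M C_* h ‖u − u_h‖_V, where M is the continuity constant of a. -/

import Mathlib

open scoped RealInnerProductSpace

noncomputable section

/-- Aubin–Nitsche duality argument: if the adjoint problem is regular with approximation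
order `C_* h`, then the Galerkin error in the weaker norm satisfies
`‖u - u_h‖_W ≤ M C_* h ‖u - u_h‖_V`. -/
theorem stmt10 {V W : Type*}
    [NormedAddCommGroup V] [InnerProductSpace ℝ V] [CompleteSpace V]
    [NormedAddCommGroup W] [InnerProductSpace ℝ W] [CompleteSpace W]
    (j : V →ₗ[ℝ] W) (hj : ∀ v : V, ‖j v‖ ≤ ‖v‖)
    (a : V →ₗ[ℝ] V →ₗ[ℝ] ℝ) (M c : ℝ) (hc : 0 < c) (hM : 0 ≤ M)
    (hcont : ∀ u v : V, |a u v| ≤ M * ‖u‖ * ‖v‖)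
    (hcoer : ∀ u : V, c * ‖u‖ ^ 2 ≤ a u u)
    (Vh : Submodule ℝ V) (f : V →ₗ[ℝ] ℝ)
    (u uh : V) (hu : ∀ v : V, a u v = f v)
    (huh : uh ∈ Vh) (hgal : ∀ vh ∈ Vh, a uh vh = f vh)
    (Cstar h : ℝ) (hCstar : 0 ≤ Cstar) (hh : 0 < h)
    (hreg : ∀ g : W, ∃ z : V, (∀ v : V, a v z = ⟪g, j v⟫) ∧
      (⨅ vh : Vh, ‖z - (vh : V)‖) ≤ Cstar * h * ‖g‖) :
    ‖j u - j uh‖ ≤ M * Cstar * h * ‖u - uh‖ := by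
  set e := u - uh with he
  set g := j e with hg
  have hje : j u - j uh = g := by simp [hg, he, map_sub]
  rw [hje]
  obtain ⟨z, hz, hzh⟩ := hreg g
  -- Galerkin orthogonality
  have horth : ∀ vh ∈ Vh, a e vh = 0 := by
    intro vh hvh
    simp [he, map_sub, hu vh, hgal vh hvh]
  -- key: ‖g‖² = a e (z - vh) for any vh ∈ Vh
  have hkey : ∀ vh : Vh, ‖g‖ ^ 2 ≤ M * ‖e‖ * ‖z - (vh : V)‖ := by
    intro vh
    have h1 : a e (z - (vh : V)) = ‖g‖ ^ 2 := by
      have : a e z = ⟪g, g⟫ := hz e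
      simp [map_sub, this, horth vh vh.2, real_inner_self_eq_norm_sq]
    calc ‖g‖ ^ 2 = a e (z - (vh : V)) := h1.symm
      _ ≤ |a e (z - (vh : V))| := le_abs_self _
      _ ≤ M * ‖e‖ * ‖z - (vh : V)‖ := hcont _ _
  have hMe : 0 ≤ M * ‖e‖ := mul_nonneg hM (norm_nonneg _)
  have h2 : ‖g‖ ^ 2 ≤ M * ‖e‖ * (Cstar * h * ‖g‖) := by
    rcases eq_or_lt_of_le hMe with hz0 | hpos
    · have := hkey ⟨0, Vh.zero_mem⟩
      rw [← hz0] at this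
      nlinarith [this, norm_nonneg g, mul_nonneg (mul_nonneg hCstar hh.le) (norm_nonneg g)]
    · have hle : ‖g‖ ^ 2 / (M * ‖e‖) ≤ ⨅ vh : Vh, ‖z - (vh : V)‖ := by
        apply le_ciInf
        intro vh
        rw [div_le_iff₀ hpos]
        have := hkey vh
        linarith [hkey vh]
      have := hle.trans hzh
      calc ‖g‖ ^ 2 = (M * ‖e‖) * (‖g‖ ^ 2 / (M * ‖e‖)) := by
            exact (mul_div_cancel₀ _ hpos.ne').symm
        _ ≤ (M * ‖e‖) * (Cstar * h * ‖g‖) := by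
            exact mul_le_mul_of_nonneg_left this hMe
  rcases eq_or_lt_of_le (norm_nonneg g) with hg0 | hgpos
  · rw [← hg0]
    positivity
  · have := (mul_le_mul_iff_left₀ hgpos).mp (by nlinarith [h2] : ‖g‖ * ‖g‖ ≤ (M * Cstar * h * ‖e‖) * ‖g‖)
    exact this
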